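/- Under Assumptions A1 and A2, L_ε(0; ḡ_v) = f(x̄) and W(0; ḡ_v) = {0}. -/

import Mathlib

open Set Filter Topology
open scoped RealInnerProductSpace

noncomputable section

variable {F : Type*} [NormedAddCommGroup F] [InnerProductSpace ℝ F]

/-- The Fréchet (regular) normal cone to a set `C` at `x`. -/
def frechetNormalCone (C : Set F) (x : F) : Set F :=
  {v | ∀ δ > (0:ℝ), ∃ r > (0:ℝ), ∀ x' ∈ C, ‖x' - x‖ < r → ⟪v, x' - x⟫ ≤ δ * ‖x' - x‖}

/-- The limiting (Mordukhovich) normal cone to a set `C` at `x`. -/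
def limitingNormalCone (C : Set F) (x : F) : Set F :=
  {v | ∃ xs : ℕ → F, ∃ vs : ℕ → F, (∀ k, xs k ∈ C) ∧ Tendsto xs atTop (𝓝 x) ∧
    (∀ k, vs k ∈ frechetNormalCone C (xs k)) ∧ Tendsto vs atTop (𝓝 v)}

/-- `C` is locally closed at `x`. -/
def LocallyClosedAt (C : Set F) (x : F) : Prop := ∃ U ∈ 𝓝 x, IsClosed (C ∩ U)

/-- Prox-regularity of the set `C` at `xb` for the normal vector `wb`,
with respect to `ε` and `ρ`. -/
def ProxRegularSetAt (C : Set F) (xb wb : F) (ε ρ : ℝ) : Prop :=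
  0 < ε ∧ 0 ≤ ρ ∧ LocallyClosedAt C xb ∧ xb ∈ C ∧ wb ∈ limitingNormalCone C xb ∧
    ∀ x w : F, ‖x - xb‖ < ε → w ∈ limitingNormalCone C x → ‖w - wb‖ < ε →
      ∀ x' ∈ C, ‖x' - xb‖ ≤ ε → ⟪w, x' - x⟫ ≤ ρ / 2 * ‖x' - x‖ ^ 2

/-- Clarke regularity of a set at a point: the set is locally closed there and every
limiting normal is a Fréchet (regular) normal. -/
def ClarkeRegularSetAt (C : Set F) (x : F) : Prop :=
  LocallyClosedAt C x ∧ limitingNormalCone C x ⊆ frechetNormalCone C x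

/-- The Fréchet subdifferential of `f : F → ℝ ∪ {±∞}` at `x`. -/
def frechetSubdiff (f : F → EReal) (x : F) : Set F :=
  {v | ∃ a : ℝ, f x = (a : EReal) ∧ ∀ δ > (0:ℝ), ∃ r > (0:ℝ), ∀ x' : F, ‖x' - x‖ < r →
    ((a + ⟪v, x' - x⟫ - δ * ‖x' - x‖ : ℝ) : EReal) ≤ f x'}

/-- The limiting subdifferential of `f` at `x` (with `f`-attentive convergence). -/
def limSubdiff (f : F → EReal) (x : F) : Set F :=
  {v | ∃ xs : ℕ → F, ∃ vs : ℕ → F, Tendsto xs atTop (𝓝 x) ∧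
    Tendsto (fun k => f (xs k)) atTop (𝓝 (f x)) ∧
    (∀ k, vs k ∈ frechetSubdiff f (xs k)) ∧ Tendsto vs atTop (𝓝 v)}

/-- The epigraph of `f`, viewed inside the `L²`-product `F ×₂ ℝ`. -/
def epiSet (f : F → EReal) : Set (WithLp 2 (F × ℝ)) :=
  {p | f (WithLp.equiv 2 (F × ℝ) p).1 ≤ ((WithLp.equiv 2 (F × ℝ) p).2 : EReal)}

/-- Prox-regularity of the function `f` at `xb` for the subgradient `vb`, with respect
to `ε` and `ρ`. -/
def ProxRegularFnAt (f : F → EReal) (xb vb : F) (ε ρ : ℝ) : Prop :=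
  0 < ε ∧ 0 ≤ ρ ∧ vb ∈ limSubdiff f xb ∧
  ∃ a : ℝ, f xb = (a : EReal) ∧ (∃ U ∈ 𝓝 xb, ∀ x ∈ U, LowerSemicontinuousAt f x) ∧
    ∀ (x x' v : F) (b : ℝ), f x = (b : EReal) → |b - a| < ε → ‖x - xb‖ < ε →
      v ∈ limSubdiff f x → ‖v - vb‖ < ε → ‖x' - xb‖ ≤ ε →
      ((b + ⟪v, x' - x⟫ - ρ / 2 * ‖x' - x‖ ^ 2 : ℝ) : EReal) ≤ f x'

/-- `f` is properly prox-regular at `xb` w.r.t. `ε`, `ρ`: it is prox-regular there for every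
limiting subgradient, and its epigraph is prox-regular at `(xb, f xb)` for every normal of
the form `(g, -1)`. -/
def ProperlyProxRegularAt (f : F → EReal) (xb : F) (ε ρ : ℝ) : Prop :=
  (∀ g ∈ limSubdiff f xb, ProxRegularFnAt f xb g ε ρ) ∧
  ∃ a : ℝ, f xb = (a : EReal) ∧
    ∀ g : F, (WithLp.equiv 2 (F × ℝ)).symm (g, -1) ∈
        limitingNormalCone (epiSet f) ((WithLp.equiv 2 (F × ℝ)).symm (xb, a)) →
      ProxRegularSetAt (epiSet f) ((WithLp.equiv 2 (F × ℝ)).symm (xb, a))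
        ((WithLp.equiv 2 (F × ℝ)).symm (g, -1)) ε ρ

/-- Assumption A1: `f` is proper, lower semicontinuous on the whole space, and properly
prox-regular at `xb` with respect to `eb` and `ρ`. -/
def AssumptionA1 (f : F → EReal) (xb : F) (eb ρ : ℝ) : Prop :=
  (∀ x, f x ≠ ⊥) ∧ (∃ x, f x ≠ ⊤) ∧ LowerSemicontinuous f ∧ ProperlyProxRegularAt f xb eb ρ

/-- `D_ε f`: the set of `g` such that `g + int B_V(0, ε) ⊆ ∂f(xb)`
(the `ε`-relative interior of `∂f(xb)` when the UV-decomposition is used). -/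
def DEps (f : F → EReal) (xb : F) (V : Submodule ℝ F) (ε : ℝ) : Set F :=
  {g | ∀ w ∈ V, ‖w‖ < ε → g + w ∈ limSubdiff f xb}

/-- Orthogonal projection onto a submodule, as a map into the ambient space. -/
def projV (V : Submodule ℝ F) [Submodule.HasOrthogonalProjection V] (x : F) : F :=
  (Submodule.orthogonalProjectionOnto V x : F)

/-- The U-Lagrangian `L_ε(u; gb_v)`. -/
def ULagrangian (f : F → EReal) (xb gb : F) (V : Submodule ℝ F) [Submodule.HasOrthogonalProjection V]
    (ε : ℝ) (u : ↥(Vᗮ)) : EReal :=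
  sInf ((fun v : F => f (xb + ↑u + v) - ((⟪projV V gb, v⟫ : ℝ) : EReal)) ''
    {v : F | v ∈ V ∧ ‖v‖ ≤ ε})

/-- The set `W(u; gb_v)` of minimizers defining the U-Lagrangian (with the convention
that the argmin is empty when the infimum is `+∞`). -/
def Wset (f : F → EReal) (xb gb : F) (V : Submodule ℝ F) [Submodule.HasOrthogonalProjection V]
    (ε : ℝ) (u : ↥(Vᗮ)) : Set ↥V :=
  {v : ↥V | ‖(v : F)‖ ≤ ε ∧
    f (xb + ↑u + ↑v) - ((⟪projV V gb, (v:F)⟫ : ℝ) : EReal) = ULagrangian f xb gb V ε u ∧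
    ULagrangian f xb gb V ε u ≠ ⊤}

/-- The function `h(u,v) = f(xb+u+v) - ⟪gb_v, v⟫ + δ_{B_V(0,ε)}(v)` on `U ×₂ V`. -/
def hFun (f : F → EReal) (xb gb : F) (V : Submodule ℝ F) [Submodule.HasOrthogonalProjection V] (ε : ℝ)
    (p : WithLp 2 (↥(Vᗮ) × ↥V)) : EReal :=
  f (xb + ↑(WithLp.equiv 2 (↥(Vᗮ) × ↥V) p).1 + ↑(WithLp.equiv 2 (↥(Vᗮ) × ↥V) p).2)
    - ((⟪projV V gb, ((WithLp.equiv 2 (↥(Vᗮ) × ↥V) p).2 : F)⟫ : ℝ) : EReal)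
    + (if ‖((WithLp.equiv 2 (↥(Vᗮ) × ↥V) p).2 : F)‖ ≤ ε then (0 : EReal) else ⊤)

/-- `g` is a proximal subgradient of `φ` at `xb`. -/
def IsProximalSubgradient (φ : F → EReal) (xb g : F) : Prop :=
  ∃ a : ℝ, φ xb = (a : EReal) ∧ ∃ ε > (0:ℝ), ∃ ρ > (0:ℝ), ∀ x : F, ‖x - xb‖ ≤ ε →
    ((a + ⟪g, x - xb⟫ - ρ / 2 * ‖x - xb‖ ^ 2 : ℝ) : EReal) ≤ φ x

/-- The localized tilted argmin mapping used in the definition of tilt stability. -/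
def tiltArgmin (φ : F → EReal) (xb : F) (a δ : ℝ) (g : F) : Set F :=
  {x | ‖x - xb‖ ≤ δ ∧ ∀ y : F, ‖y - xb‖ ≤ δ →
    φ x - ((a + ⟪g, x - xb⟫ : ℝ) : EReal) ≤ φ y - ((a + ⟪g, y - xb⟫ : ℝ) : EReal)}

/-- `xb` gives a tilt-stable local minimum of `φ`. -/
def TiltStableLocalMin (φ : F → EReal) (xb : F) : Prop :=
  ∃ a : ℝ, φ xb = (a : EReal) ∧ ∃ δ > (0:ℝ), ∃ M : F → F, ∃ η > (0:ℝ), ∃ L : ℝ,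
    M 0 = xb ∧ (∀ g g' : F, ‖g‖ < η → ‖g'‖ < η → ‖M g - M g'‖ ≤ L * ‖g - g'‖) ∧
    ∀ g : F, ‖g‖ < η → tiltArgmin φ xb a δ g = {M g}

/-- Strict differentiability (with gradient vector `A`) of an extended-real-valued
function at `xb`. -/
def StrictDiffAt (φ : F → EReal) (xb A : F) : Prop :=
  (∃ a : ℝ, φ xb = (a : EReal)) ∧ ∀ δ > (0:ℝ), ∃ r > (0:ℝ), ∀ x x' : F,
    ‖x - xb‖ < r → ‖x' - xb‖ < r →
    ∃ a b : ℝ, φ x = (a : EReal) ∧ φ x' = (b : EReal) ∧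
      |b - a - ⟪A, x' - x⟫| ≤ δ * ‖x' - x‖

/-- `φ` is subdifferentially continuous at `xb` (for every subgradient there). -/
def SubdiffContinuousAt (φ : F → EReal) (xb : F) : Prop :=
  ∀ vb ∈ limSubdiff φ xb, ∀ xs : ℕ → F, ∀ vs : ℕ → F, Tendsto xs atTop (𝓝 xb) →
    (∀ k, vs k ∈ limSubdiff φ (xs k)) → Tendsto vs atTop (𝓝 vb) →
    Tendsto (fun k => φ (xs k)) atTop (𝓝 (φ xb))

/-- Strong metric regularity of the subdifferential map `∂φ` at `(xb, yb)`: the inverse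
admits a Lipschitz single-valued localization around `(yb, xb)`. -/
def StronglyMetricallyRegularSubdiffAt (φ : F → EReal) (xb yb : F) : Prop :=
  yb ∈ limSubdiff φ xb ∧ ∃ a > (0:ℝ), ∃ b > (0:ℝ), ∃ L : ℝ, ∃ s : F → F,
    (∀ g g' : F, ‖g - yb‖ < a → ‖g' - yb‖ < a → ‖s g - s g'‖ ≤ L * ‖g - g'‖) ∧
    ∀ g : F, ‖g - yb‖ < a → ‖s g - xb‖ < b ∧
      ∀ x : F, ‖x - xb‖ < b → (g ∈ limSubdiff φ x ↔ x = s g)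

/-- `f` is subdifferentially regular at `x`: `f x` is finite and the epigraph is Clarke
regular at `(x, f x)`. -/
def SubdiffRegularAt (f : F → EReal) (x : F) : Prop :=
  ∃ a : ℝ, f x = (a : EReal) ∧
    ClarkeRegularSetAt (epiSet f) ((WithLp.equiv 2 (F × ℝ)).symm (x, a))

/-- `M` is (around `yb`) a `C^k`-smooth manifold: locally the common zero set of finitely
many `C^k` functions with linearly independent gradients at `yb`. -/
def IsManifoldAround [CompleteSpace F] (M : Set F) (yb : F) (k : WithTop ℕ∞) : Prop :=
  ∃ m : ℕ, ∃ Q : Set F, ∃ φ : Fin m → F → ℝ, IsOpen Q ∧ yb ∈ Q ∧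
    (∀ i, ContDiff ℝ k (φ i)) ∧ (M ∩ Q = {y ∈ Q | ∀ i, φ i y = 0}) ∧
    LinearIndependent ℝ fun i => gradient (φ i) yb

/-- Continuity (inner- and outer-semicontinuity) of `∂f` at `xb` relative to `M`. -/
def SubdiffContinuousRelAt (f : F → EReal) (M : Set F) (xb : F) : Prop :=
  (∀ g ∈ limSubdiff f xb, ∀ xs : ℕ → F, (∀ k, xs k ∈ M) → Tendsto xs atTop (𝓝 xb) →
      ∃ gs : ℕ → F, (∀ k, gs k ∈ limSubdiff f (xs k)) ∧ Tendsto gs atTop (𝓝 g)) ∧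
  (∀ g : F, ∀ xs : ℕ → F, ∀ gs : ℕ → F, (∀ k, xs k ∈ M) → Tendsto xs atTop (𝓝 xb) →
      (∀ k, gs k ∈ limSubdiff f (xs k)) → Tendsto gs atTop (𝓝 g) → g ∈ limSubdiff f xb)

/-- `f` is `C^k`-partly smooth at `xb` relative to `M`, with `V`-space `V`. -/
def PartlySmoothAt [CompleteSpace F] (f : F → EReal) (xb : F) (M : Set F)
    (V : Submodule ℝ F) (k : WithTop ℕ∞) : Prop :=
  IsManifoldAround M xb k ∧ xb ∈ M ∧
  (∃ N : Set F, IsOpen N ∧ xb ∈ N ∧ ∃ g : F → ℝ, ContDiff ℝ k g ∧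
      ∀ y ∈ M ∩ N, f y = ((g y : ℝ) : EReal)) ∧
  (∃ δ > (0:ℝ), ∀ y ∈ M, ‖y - xb‖ < δ → SubdiffRegularAt f y ∧ (limSubdiff f y).Nonempty) ∧
  limitingNormalCone M xb = (V : Set F) ∧
  SubdiffContinuousRelAt f M xb

/-- The subderivative `df(xb)(w)`. -/
def subderiv (f : F → EReal) (xb : F) (w : F) : EReal :=
  liminf (fun p : ℝ × F => (((p.1)⁻¹ : ℝ) : EReal) * (f (xb + p.1 • p.2) - f xb))
    ((𝓝[>] (0:ℝ)) ×ˢ 𝓝 w)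

/-- The normal cone to a convex set `C` at `x` in the sense of convex analysis. -/
def convexNormalCone (C : Set F) (x : F) : Set F :=
  {w | ∀ y ∈ C, ⟪w, y - x⟫ ≤ 0}


theorem ProxRegularFnAt.coe_add_inner_sub_le {f : F → EReal} {xb g : F} {eb ρ a : ℝ}
    (h : ProxRegularFnAt f xb g eb ρ) (ha : f xb = a) {v : F} (hv : ‖v‖ ≤ eb) :
    ((a + ⟪g, v⟫ - ρ / 2 * ‖v‖ ^ 2 : ℝ) : EReal) ≤ f (xb + v) := by
  obtain ⟨heb, -, hg, a', ha', -, hineq⟩ := h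
  obtain rfl : a' = a := EReal.coe_injective (ha'.symm.trans ha)
  simpa using hineq xb (xb + v) g a' ha' (by simpa using heb) (by simpa using heb) hg
    (by simpa using heb) (by simpa using hv)

theorem inner_projV_of_mem {V : Submodule ℝ F} [V.HasOrthogonalProjection] (g : F) {v : F}
    (hv : v ∈ V) : ⟪projV V g, v⟫ = ⟪g, v⟫ := by
  rw [show projV V g = V.starProjection g from rfl, V.inner_starProjection_left_eq_right,
    Submodule.starProjection_eq_self_iff.mpr hv]

/- Tilting `gb` by `w = t • (v / ‖v‖)` with `ρ ε / 2 < t < ε` keeps it in `∂f(xb)`, and the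
prox-regularity inequality for `gb + w` gains `t ‖v‖`, more than the `ρ/2 ‖v‖²` it loses. -/
theorem lt_sub_inner_projV_of_mem_DEps {f : F → EReal} {xb gb : F} {V : Submodule ℝ F}
    [V.HasOrthogonalProjection] {eb ρ ε : ℝ} (hgb : gb ∈ DEps f xb V ε)
    (hprox : ∀ g ∈ limSubdiff f xb, ProxRegularFnAt f xb g eb ρ) (hρ : ρ < 2) (hε : ε < eb)
    {v : F} (hvV : v ∈ V) (hv0 : v ≠ 0) (hvε : ‖v‖ ≤ ε) :
    f xb < f (xb + v) - ((⟪projV V gb, v⟫ : ℝ) : EReal) := by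
  have hv : 0 < ‖v‖ := norm_pos_iff.mpr hv0
  have hε0 : 0 < ε := hv.trans_le hvε
  obtain ⟨-, hρ0, -, a, ha, -⟩ := hprox gb (by simpa using hgb 0 V.zero_mem (by simpa))
  have htε : ε * (ρ + 2) / 4 < ε := by nlinarith
  have htρ : ρ / 2 * ε < ε * (ρ + 2) / 4 := by nlinarith
  set t := ε * (ρ + 2) / 4
  set w := (t / ‖v‖) • v
  have hw : ‖w‖ = t := by
    rw [norm_smul, Real.norm_of_nonneg (by positivity), div_mul_cancel₀ _ hv.ne']
  have hwv : ⟪w, v⟫ = t * ‖v‖ := by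
    rw [real_inner_smul_left, real_inner_self_eq_norm_sq]
    field_simp
  have hsub : gb + w ∈ limSubdiff f xb := hgb w (V.smul_mem _ hvV) (by rwa [hw])
  have hle := (hprox _ hsub).coe_add_inner_sub_le ha (hvε.trans hε.le)
  rw [inner_add_left, hwv, ← inner_projV_of_mem gb hvV] at hle
  have hquad : ρ / 2 * ‖v‖ ^ 2 < t * ‖v‖ := by
    have : ρ / 2 * ‖v‖ ≤ ρ / 2 * ε := by gcongr
    nlinarith [mul_lt_mul_of_pos_right (this.trans_lt htρ) hv]
  rw [ha, EReal.lt_sub_iff_add_lt (.inr (EReal.coe_ne_top _)) (.inr (EReal.coe_ne_bot _)),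
    ← EReal.coe_add]
  exact lt_of_lt_of_le (EReal.coe_lt_coe_iff.mpr (by linarith)) hle

section StrictMinimizer

variable {f : F → EReal} {xb gb : F} {V : Submodule ℝ F} [V.HasOrthogonalProjection] {ε : ℝ}

theorem ULagrangian_zero_eq (hε : 0 ≤ ε)
    (hmin : ∀ v ∈ V, ‖v‖ ≤ ε → v ≠ 0 → f xb < f (xb + v) - ((⟪projV V gb, v⟫ : ℝ) : EReal)) :
    ULagrangian f xb gb V ε 0 = f xb := by
  refine IsGLB.sInf_eq <| IsLeast.isGLB ⟨⟨0, ⟨V.zero_mem, by simpa⟩, by simp⟩, ?_⟩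
  rintro _ ⟨v, ⟨hvV, hvε⟩, rfl⟩
  rcases eq_or_ne v 0 with rfl | hv0
  · simp
  · simpa using (hmin v hvV hvε hv0).le

theorem Wset_zero_eq (hε : 0 ≤ ε) (hfin : f xb ≠ ⊤)
    (hmin : ∀ v ∈ V, ‖v‖ ≤ ε → v ≠ 0 → f xb < f (xb + v) - ((⟪projV V gb, v⟫ : ℝ) : EReal)) :
    Wset f xb gb V ε 0 = {0} := by
  ext v
  simp only [Wset, mem_ofPred_eq, mem_singleton_iff, ULagrangian_zero_eq hε hmin,
    ZeroMemClass.coe_zero, add_zero]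
  constructor
  · rintro ⟨hvε, heq, -⟩
    by_contra hv0
    exact (hmin v v.2 hvε (by simpa using hv0)).ne heq.symm
  · rintro rfl
    exact ⟨by simpa, by simp, hfin⟩

end StrictMinimizer

/-- Under Assumptions A1 and A2, `L_ε(0; gb_v) = f(xb)` and `W(0; gb_v) = {0}`. -/
theorem ULagrangian_at_zero {n : ℕ} (f : EuclideanSpace ℝ (Fin n) → EReal) (xb : EuclideanSpace ℝ (Fin n)) (eb ρ ε : ℝ) (hε : 0 < ε)
    (V : Submodule ℝ (EuclideanSpace ℝ (Fin n))) (gb : EuclideanSpace ℝ (Fin n)) (hgb : gb ∈ DEps f xb V ε)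
    (hA1 : AssumptionA1 f xb eb ρ)
    (hA2 : 0 < ρ ∧ ρ < 2 ∧ ε < eb) :
    ULagrangian f xb gb V ε 0 = f xb ∧ Wset f xb gb V ε 0 = {(0 : ↥V)} := by
  obtain ⟨-, -, -, hprox, a, ha, -⟩ := hA1
  have hmin : ∀ v ∈ V, ‖v‖ ≤ ε → v ≠ 0 → f xb < f (xb + v) - ((⟪projV V gb, v⟫ : ℝ) : EReal) :=
    fun v hvV hvε hv0 => lt_sub_inner_projV_of_mem_DEps hgb hprox hA2.2.1 hA2.2.2 hvV hv0 hvε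
  exact ⟨ULagrangian_zero_eq hε.le hmin, Wset_zero_eq hε.le (ha ▸ EReal.coe_ne_top a) hmin⟩

end
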